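/- Let δ = ±1, let a, b ∈ ℝ with a ≠ 0, let η ∈ ℝ with η ≠ 0, and let φ : ℝ → ℝ be a smooth strictly monotone function (φ′ ≠ 0 everywhere). Let u, v : U → ℝ be smooth functions on an open set U ⊆ ℝ² satisfying u_{xt} = (au + b)φ(v_x) + 1, v_{xt} = δ(a²/φ′(v_x))·u_x·(au + b) on U. Define F₁₁ = η a·u_x, F₂₁ = η², F₃₁ = −η·φ(v_x), F₁₂ = 0, F₂₂ = a²u + ab, F₃₂ = a/η. Then on U the structure equations hold: −∂_t F₁₁ + ∂_x F₁₂ = F₃₁F₂₂ − F₃₂F₂₁, −∂_t F₂₁ + ∂_x F₂₂ = F₁₁F₃₂ − F₁₂F₃₁, −∂_t F₃₁ + ∂_x F₃₂ = δ(F₁₁F₂₂ − F₁₂F₂₁); hence this system describes pseudospherical surfaces (δ = 1), resp. spherical surfaces (δ = −1), with these associated functions. -/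

import Mathlib

/-! The first structure equation is the equation for `u_xt` multiplied by `-ηa`, and the second
holds identically. In the third, the chain rule gives `∂_t F₃₁ = -η φ'(v_x) v_xt`, and the factor
`1 / φ'(v_x)` in the equation for `v_xt` is there precisely to cancel `φ'(v_x)`. -/

open Real

noncomputable def pdx (f : ℝ × ℝ → ℝ) (p : ℝ × ℝ) : ℝ := fderiv ℝ f p (1, 0)

noncomputable def pdt (f : ℝ × ℝ → ℝ) (p : ℝ × ℝ) : ℝ := fderiv ℝ f p (0, 1)

/-- The structure equations of a surface of constant Gaussian curvature `-δ`. -/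
def StructEqs (δ : ℝ) (U : Set (ℝ × ℝ)) (F11 F12 F21 F22 F31 F32 : ℝ × ℝ → ℝ) : Prop :=
  ∀ p ∈ U,
    -(pdt F11 p) + pdx F12 p = F31 p * F22 p - F32 p * F21 p ∧
    -(pdt F21 p) + pdx F22 p = F11 p * F32 p - F12 p * F31 p ∧
    -(pdt F31 p) + pdx F32 p = δ * (F11 p * F22 p - F12 p * F21 p)

section PartialDerivatives

variable (f : ℝ × ℝ → ℝ) (p : ℝ × ℝ)

@[simp] lemma pdx_const (c : ℝ) : pdx (fun _ => c) p = 0 := by simp [pdx]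

@[simp] lemma pdt_const (c : ℝ) : pdt (fun _ => c) p = 0 := by simp [pdt]

@[simp] lemma pdx_const_mul (c : ℝ) : pdx (fun q => c * f q) p = c * pdx f p := by
  simp [pdx, ← smul_eq_mul, ← Pi.smul_def, fderiv_const_smul_field]

@[simp] lemma pdt_const_mul (c : ℝ) : pdt (fun q => c * f q) p = c * pdt f p := by
  simp [pdt, ← smul_eq_mul, ← Pi.smul_def, fderiv_const_smul_field]

@[simp] lemma pdx_add_const (c : ℝ) : pdx (fun q => f q + c) p = pdx f p := by
  simp [pdx, fderiv_add_const]

@[simp] lemma pdt_neg : pdt (fun q => -f q) p = -pdt f p := by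
  simp [pdt, fderiv_fun_neg]

variable {f p}

lemma pdt_comp {g : ℝ → ℝ} (hg : DifferentiableAt ℝ g (f p)) (hf : DifferentiableAt ℝ f p) :
    pdt (fun q => g (f q)) p = deriv g (f p) * pdt f p := by
  rw [pdt, pdt, ← Function.comp_def, (hg.hasDerivAt.comp_hasFDerivAt p hf.hasFDerivAt).fderiv]
  rfl

lemma ContDiffAt.differentiableAt_pdx (hf : ContDiffAt ℝ 2 f p) :
    DifferentiableAt ℝ (pdx f) p :=
  ((hf.fderiv_right (m := 1) (by norm_num)).clm_apply contDiffAt_const).differentiableAt one_ne_zero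

end PartialDerivatives

theorem system_exquatroparametros_describes_pss_ss_general (δ a b η : ℝ)
    (hη : η ≠ 0)
    (φ : ℝ → ℝ) (hφ : ContDiff ℝ (⊤ : ℕ∞) φ)
    (hφ' : ∀ s : ℝ, deriv φ s ≠ 0)
    (U : Set (ℝ × ℝ)) (hU : IsOpen U)
    (u v : ℝ × ℝ → ℝ)
    (hv : ContDiffOn ℝ (⊤ : ℕ∞) v U)
    (heq1 : ∀ p ∈ U, pdt (pdx u) p = (a * u p + b) * φ (pdx v p) + 1)
    (heq2 : ∀ p ∈ U,
      pdt (pdx v) p = δ * (a ^ 2 / deriv φ (pdx v p)) * pdx u p * (a * u p + b)) :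
    StructEqs δ U
      (fun q => η * a * pdx u q)
      (fun _ => 0)
      (fun _ => η ^ 2)
      (fun q => a ^ 2 * u q + a * b)
      (fun q => -(η * φ (pdx v q)))
      (fun _ => a / η) := by
  intro p hp
  have hvx : DifferentiableAt ℝ (pdx v) p :=
    ((hv.contDiffAt (hU.mem_nhds hp)).of_le (WithTop.coe_le_coe.mpr le_top)).differentiableAt_pdx
  have hφvx : pdt (fun q => φ (pdx v q)) p = deriv φ (pdx v p) * pdt (pdx v) p :=
    pdt_comp (hφ.differentiable (by simp) _) hvx
  refine ⟨?_, ?_, ?_⟩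
  · simp only [pdt_const_mul, pdx_const, heq1 p hp]
    field_simp
    ring
  · simp only [pdt_const, pdx_add_const, pdx_const_mul]
    field_simp
    ring
  · simp only [pdt_neg, pdt_const_mul, hφvx, pdx_const, heq2 p hp]
    field_simp [hφ' (pdx v p)]
    ring

/-- The system `u_xt = (au + b)φ(v_x) + 1`, `v_xt = δ(a²/φ′(v_x))u_x(au + b)`
describes pseudospherical surfaces (`δ = 1`), resp. spherical surfaces (`δ = −1`). -/
theorem system_exquatroparametros_describes_pss_ss (δ a b η : ℝ)
    (hδ : δ = 1 ∨ δ = -1) (ha : a ≠ 0) (hη : η ≠ 0)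
    (φ : ℝ → ℝ) (hφ : ContDiff ℝ (⊤ : ℕ∞) φ)
    (hφ' : ∀ s : ℝ, deriv φ s ≠ 0) (hφmono : StrictMono φ ∨ StrictAnti φ)
    (U : Set (ℝ × ℝ)) (hU : IsOpen U)
    (u v : ℝ × ℝ → ℝ)
    (hu : ContDiffOn ℝ (⊤ : ℕ∞) u U) (hv : ContDiffOn ℝ (⊤ : ℕ∞) v U)
    (heq1 : ∀ p ∈ U, pdt (pdx u) p = (a * u p + b) * φ (pdx v p) + 1)
    (heq2 : ∀ p ∈ U,
      pdt (pdx v) p = δ * (a ^ 2 / deriv φ (pdx v p)) * pdx u p * (a * u p + b)) :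
    StructEqs δ U
      (fun q => η * a * pdx u q)
      (fun _ => 0)
      (fun _ => η ^ 2)
      (fun q => a ^ 2 * u q + a * b)
      (fun q => -(η * φ (pdx v q)))
      (fun _ => a / η) :=
  system_exquatroparametros_describes_pss_ss_general δ a b η hη φ hφ hφ' U hU u v hv heq1 heq2
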